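/- For all integers r, f ≥ 0, the one-row flagged factorial Q-function equals a single generating-function coefficient: Q_{(r),(f)}(x;z|b) = q_r^{[f | r−f−1]}(x;z|b), i.e. the sum of weights over all marked shifted tableaux of the one-row flagged strict partition ((r),(f)) equals the coefficient of u^r in q_u(x) · e_u^{[f]}(z) · e_u^{[r−f−1]}(b). The identity holds for every number n of x-variables. -/

import Mathlib

open Finset

noncomputable section

variable {R : Type*} [CommRing R]

/-- The formal power series `1/(1 - x·u)`. -/
def geomSeries (x : R) : PowerSeries R := PowerSeries.mk fun m => x ^ m

/-- `e_u^{[k]}(c)`: the power series `∏_{i=1}^k (1 + c_i u)` for `k ≥ 0`, and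
`∏_{i=1}^{-k} (1 - c_i u)⁻¹` for `k < 0`.  The sequence `c` is read at indices `1, 2, …`. -/
def eSer (k : ℤ) (c : ℕ → R) : PowerSeries R :=
  if 0 ≤ k then ∏ i ∈ Finset.range k.toNat, (1 + PowerSeries.C (c (i + 1)) * PowerSeries.X)
  else ∏ i ∈ Finset.range (-k).toNat, geomSeries (c (i + 1))

/-- `q_u(x) = ∏_{i=1}^n (1 + x_i u)/(1 - x_i u)`, with `n` x-variables. -/
def qSer (n : ℕ) (x : ℕ → R) : PowerSeries R :=
  ∏ i ∈ Finset.range n,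
    ((1 + PowerSeries.C (x (i + 1)) * PowerSeries.X) * geomSeries (x (i + 1)))

/-- The coefficient of `u^m` (`m : ℤ`) of a power series; zero when `m < 0`. -/
def coeffZ (m : ℤ) (φ : PowerSeries R) : R :=
  if 0 ≤ m then PowerSeries.coeff m.toNat φ else 0

/-- `q_m^{[ℓ]}(x|c)`: the coefficient of `u^m` in `q_u(x)·e_u^{[ℓ]}(c)`. -/
def qC (m ℓ : ℤ) (n : ℕ) (x c : ℕ → R) : R := coeffZ m (qSer n x * eSer ℓ c)

/-- `q_m^{[k|ℓ]}(x;z|c)`: the coefficient of `u^m` in `q_u(x)·e_u^{[k]}(z)·e_u^{[ℓ]}(c)`. -/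
def qC2 (m k ℓ : ℤ) (n : ℕ) (x z c : ℕ → R) : R :=
  coeffZ m (qSer n x * eSer k z * eSer ℓ c)

/-- `e_m^{[k]}(c)`. -/
def eC (m k : ℤ) (c : ℕ → R) : R := coeffZ m (eSer k c)

/-- `e_m^{[k|ℓ]}(z|c)`: the coefficient of `u^m` in `e_u^{[k]}(z)·e_u^{[ℓ]}(c)`. -/
def eC2 (m k ℓ : ℤ) (z c : ℕ → R) : R := coeffZ m (eSer k z * eSer ℓ c)

/-- Extension of `b` to all integer indices using the convention `b_{-i} = -b_{i+1}` for
`i ≥ 0`; positive indices are untouched.  This also implements the `⋆` substitution. -/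
def bext (b : ℤ → R) : ℤ → R := fun j => if 0 < j then b j else -b (1 - j)

/-- `ε(0) = 1` and `ε(m) = 2·(-1)^m` for `m ≥ 1`. -/
def pfEps (m : ℕ) : ℤ := if m = 0 then 1 else 2 * (-1) ^ m

/-- The subscript `α_i + Σ_{j>i} m_{ij} − Σ_{j<i} m_{ji}` in the Schur–Pfaffian. -/
def pfIdx {r : ℕ} (α : Fin r → ℤ) (m : Fin r → Fin r → ℕ) (i : Fin r) : ℤ :=
  α i + ∑ j, (if i < j then (m i j : ℤ) else 0) - ∑ j, (if j < i then (m j i : ℤ) else 0)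

/-- The Schur–Pfaffian `Pf[c^{(1)}_{α_1} ⋯ c^{(r)}_{α_r}]`, as the (finitely supported) sum
over tuples of nonnegative integers `(m_{ij})_{1 ≤ i < j ≤ r}`. -/
def schurPf {r : ℕ} (c : Fin r → ℤ → R) (α : Fin r → ℤ) : R :=
  ∑ᶠ m ∈ {m : Fin r → Fin r → ℕ | ∀ i j, ¬ i < j → m i j = 0},
    (∏ i, ∏ j, if i < j then (pfEps (m i j) : R) else 1) * ∏ i, c i (pfIdx α m i)

/-- The alphabet of primed, unmarked and circled numbers. -/
inductive MSTEntry where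
  | prime : ℕ → MSTEntry
  | unmarked : ℕ → MSTEntry
  | circ : ℕ → MSTEntry
deriving DecidableEq

namespace MSTEntry

/-- Whether an entry is circled (`1`) or not (`0`). -/
def isCirc : MSTEntry → ℕ
  | circ _ => 1
  | _ => 0

/-- Key realizing the order `1' < 1 < 2' < 2 < ⋯` within each class. -/
def key : MSTEntry → ℕ
  | prime k => 2 * k - 1
  | unmarked k => 2 * k
  | circ k => k

/-- The numeric value of an entry. -/
def val : MSTEntry → ℕ
  | prime k => k
  | unmarked k => k
  | circ k => k

/-- The total order `1' < 1 < 2' < 2 < ⋯ < 1° < 2° < ⋯` on entries of positive value. -/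
def le (a b : MSTEntry) : Prop :=
  a.isCirc < b.isCirc ∨ (a.isCirc = b.isCirc ∧ a.key ≤ b.key)

end MSTEntry

/-- The shifted Young diagram of a strict partition `λ` of length `r`:
boxes `(i, j)` with `1 ≤ i ≤ r` and `i ≤ j ≤ λ_i + i - 1` (rows and columns 1-indexed). -/
def shiftedDiag (r : ℕ) (lam : ℕ → ℕ) : Set (ℕ × ℕ) :=
  {p | 1 ≤ p.1 ∧ p.1 ≤ r ∧ p.1 ≤ p.2 ∧ p.2 ≤ lam p.1 + p.1 - 1}

/-- `T` is a marked shifted tableau of the flagged strict partition `(λ, f)` whose unmarked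
and primed entries have numeric value at most `n` (normalized to `unmarked 0` off the
diagram). -/
def IsMST (n r : ℕ) (lam f : ℕ → ℕ) (T : ℕ × ℕ → MSTEntry) : Prop :=
  (∀ p, p ∉ shiftedDiag r lam → T p = .unmarked 0) ∧
  (∀ p ∈ shiftedDiag r lam, 1 ≤ (T p).val) ∧
  (∀ i j j', (i, j) ∈ shiftedDiag r lam → (i, j') ∈ shiftedDiag r lam → j ≤ j' →
    (T (i, j)).le (T (i, j'))) ∧
  (∀ i i' j, (i, j) ∈ shiftedDiag r lam → (i', j) ∈ shiftedDiag r lam → i ≤ i' →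
    (T (i, j)).le (T (i', j))) ∧
  (∀ i i' j k k', (i, j) ∈ shiftedDiag r lam → (i', j) ∈ shiftedDiag r lam → i < i' →
    T (i, j) = .unmarked k → T (i', j) = .unmarked k' → k < k') ∧
  (∀ i j j' k k', (i, j) ∈ shiftedDiag r lam → (i, j') ∈ shiftedDiag r lam → j < j' →
    T (i, j) = .prime k → T (i, j') = .prime k' → k < k') ∧
  (∀ i j j' k k', (i, j) ∈ shiftedDiag r lam → (i, j') ∈ shiftedDiag r lam → j < j' →
    T (i, j) = .circ k → T (i, j') = .circ k' → k < k') ∧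
  (∀ p ∈ shiftedDiag r lam, (T p).le (.circ (f p.1))) ∧
  (∀ p ∈ shiftedDiag r lam, ∀ k, (T p = .unmarked k ∨ T p = .prime k) → k ≤ n)

/-- The factor of the weight `(xz|b)^T` contributed by the entry at box `p`.  The convention
`b_{-i} = -b_{i+1}` is implemented by `bext`. -/
def mstFactor (x z : ℕ → R) (b : ℤ → R) (p : ℕ × ℕ) : MSTEntry → R
  | .unmarked k => x k + bext b ((p.2 : ℤ) - (p.1 : ℤ))
  | .prime k => x k - bext b ((p.2 : ℤ) - (p.1 : ℤ))
  | .circ k => z k + bext b ((k : ℤ) + (p.1 : ℤ) - (p.2 : ℤ))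

/-- The weight `(xz|b)^T` of a marked shifted tableau. -/
def mstWeight (r : ℕ) (lam : ℕ → ℕ) (x z : ℕ → R) (b : ℤ → R) (T : ℕ × ℕ → MSTEntry) : R :=
  ∏ i ∈ Finset.range r, ∏ j ∈ Finset.range (lam (i + 1)),
    mstFactor x z b (i + 1, i + 1 + j) (T (i + 1, i + 1 + j))

/-- The flagged factorial Q-function `Q_{λ,f}(x;z|b)`, with `n` x-variables. -/
def Qflag (n r : ℕ) (lam f : ℕ → ℕ) (x z : ℕ → R) (b : ℤ → R) : R :=
  ∑ᶠ T ∈ {T : ℕ × ℕ → MSTEntry | IsMST n r lam f T}, mstWeight r lam x z b T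

/-- Ivanov's factorial Q-function `Q_λ(x|b)`: the case of the zero flag (no circled
entries, so the z-variables do not occur). -/
def QIvanov (n r : ℕ) (lam : ℕ → ℕ) (x : ℕ → R) (b : ℤ → R) : R :=
  Qflag n r lam (fun _ => 0) x (fun _ => 0) b

/-- The skew Young diagram `κ/ν`: boxes `(i, j)` with `1 ≤ i ≤ r`, `ν_i < j ≤ κ_i`. -/
def skewDiag (r : ℕ) (kap nu : ℕ → ℕ) : Set (ℕ × ℕ) :=
  {p | 1 ≤ p.1 ∧ p.1 ≤ r ∧ nu p.1 < p.2 ∧ p.2 ≤ kap p.1}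

/-- `t` is a row-strict flagged tableau of `(κ/ν, f)` (normalized to `0` off the diagram). -/
def IsRST (r : ℕ) (kap nu f : ℕ → ℕ) (t : ℕ × ℕ → ℕ) : Prop :=
  (∀ p, p ∉ skewDiag r kap nu → t p = 0) ∧
  (∀ p ∈ skewDiag r kap nu, 1 ≤ t p) ∧
  (∀ i j j', (i, j) ∈ skewDiag r kap nu → (i, j') ∈ skewDiag r kap nu → j < j' →
    t (i, j) < t (i, j')) ∧
  (∀ i i' j, (i, j) ∈ skewDiag r kap nu → (i', j) ∈ skewDiag r kap nu → i ≤ i' →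
    t (i, j) ≤ t (i', j)) ∧
  (∀ p ∈ skewDiag r kap nu, t p ≤ f p.1)

/-- The weight `∏_{e ∈ T} (z_{|e|} + b_{|e| + r(e) - c(e)})` of a row-strict flagged tableau. -/
def rstWeight (r : ℕ) (kap nu : ℕ → ℕ) (z : ℕ → R) (b : ℤ → R) (t : ℕ × ℕ → ℕ) : R :=
  ∏ i ∈ Finset.range r, ∏ j ∈ Finset.range (kap (i + 1) - nu (i + 1)),
    (z (t (i + 1, nu (i + 1) + 1 + j)) +
      b ((t (i + 1, nu (i + 1) + 1 + j) : ℤ) + ((i : ℤ) + 1) - ((nu (i + 1) : ℤ) + 1 + (j : ℤ))))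

/-- The row-strict flagged skew factorial Schur polynomial `s̃_{κ/ν,f}(z|b)`. -/
def sTilde (r : ℕ) (kap nu f : ℕ → ℕ) (z : ℕ → R) (b : ℤ → R) : R :=
  ∑ᶠ t ∈ {t : ℕ × ℕ → ℕ | IsRST r kap nu f t}, rstWeight r kap nu z b t

/-! A one-row tableau is a word read from the right: its last entry `e` is any admissible letter,
and the entries before it form a word bounded by `e.pred`, since primed and circled letters may
not repeat. So the weight sums over words of length `s` bounded by `ub` obey a transfer
recursion in `(s, ub)`. For the bounds `m` (unmarked) and `f°` these are exactly the recursions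
of the coefficients of `u^s` in `q_u(x_1, …, x_m) e_u^{[s-1]}(b)` and in
`q_u(x) e_u^{[f]}(z) e_u^{[s-f-1]}(b)`, because `g = (1 + a u)/(1 - a u)` satisfies
`g = 1 + a u + a u g` and `e_u^{[ℓ+1]}(b) = e_u^{[ℓ]}(b) (1 + b_{ℓ+1} u)` for all `ℓ ∈ ℤ`.
Induction on `(m, s)` and then on `(f, s)` gives the identity. -/

open PowerSeries

theorem geomSeries_mul_one_sub (a : R) : geomSeries a * (1 - C a * X) = 1 := by
  ext m
  cases m with
  | zero => simp [geomSeries]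
  | succ k =>
    rw [mul_sub, mul_one, map_sub, mul_comm (C a) X, ← mul_assoc, coeff_mul_C, coeff_succ_mul_X]
    simp [geomSeries, pow_succ, mul_comm]

@[simp]
theorem constantCoeff_geomSeries (a : R) : constantCoeff (geomSeries a) = 1 := by
  simp [geomSeries]

theorem coeff_succ_mul_one_add_C_mul_X (φ : PowerSeries R) (a : R) (s : ℕ) :
    coeff (s + 1) (φ * (1 + C a * X)) = coeff (s + 1) φ + a * coeff s φ := by
  rw [mul_add, mul_one, map_add, mul_comm (C a) X, ← mul_assoc, coeff_mul_C, coeff_succ_mul_X,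
    mul_comm]

/-- The factor `g = (1 + a u)/(1 - a u)` of `q_u(x)` satisfies `g = 1 + a u + a u g`. -/
theorem coeff_succ_mul_qFactor (φ : PowerSeries R) (a : R) (s : ℕ) :
    coeff (s + 1) (φ * ((1 + C a * X) * geomSeries a)) =
      coeff (s + 1) φ + a * coeff s (φ * ((1 + C a * X) * geomSeries a)) + a * coeff s φ := by
  have h : φ * ((1 + C a * X) * geomSeries a) * (1 - C a * X) = φ * (1 + C a * X) := by
    rw [mul_assoc, mul_assoc, geomSeries_mul_one_sub, mul_one]
  have hc := congrArg (coeff (s + 1)) h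
  rw [sub_eq_add_neg, ← neg_mul, ← map_neg, coeff_succ_mul_one_add_C_mul_X,
    coeff_succ_mul_one_add_C_mul_X] at hc
  linear_combination hc

theorem qSer_succ (m : ℕ) (x : ℕ → R) :
    qSer (m + 1) x = qSer m x * ((1 + C (x (m + 1)) * X) * geomSeries (x (m + 1))) :=
  prod_range_succ _ _

@[simp]
theorem constantCoeff_qSer (n : ℕ) (x : ℕ → R) : constantCoeff (qSer n x) = 1 := by
  simp [qSer, map_prod]

@[simp]
theorem constantCoeff_eSer (k : ℤ) (c : ℕ → R) : constantCoeff (eSer k c) = 1 := by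
  unfold eSer
  split_ifs <;> simp [map_prod]

theorem eSer_zero (c : ℕ → R) : eSer 0 c = 1 := by
  simp [eSer]

theorem eSer_natCast (t : ℕ) (c : ℕ → R) :
    eSer (t : ℤ) c = ∏ i ∈ range t, (1 + C (c (i + 1)) * X) := by
  simp [eSer]

theorem eSer_natCast_succ (t : ℕ) (c : ℕ → R) :
    eSer ((t + 1 : ℕ) : ℤ) c = eSer (t : ℤ) c * (1 + C (c (t + 1)) * X) := by
  rw [eSer_natCast, eSer_natCast, prod_range_succ]

theorem eSer_neg_natCast (t : ℕ) (c : ℕ → R) :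
    eSer (-(t : ℤ)) c = ∏ i ∈ range t, geomSeries (c (i + 1)) := by
  rcases Nat.eq_zero_or_pos t with rfl | ht
  · simp [eSer]
  · simp [eSer, ht.ne']

theorem coeff_eSer_natCast_of_lt {t k : ℕ} (c : ℕ → R) (h : t < k) :
    coeff k (eSer (t : ℤ) c) = 0 := by
  induction t generalizing k with
  | zero => simp [eSer, coeff_one, Nat.pos_iff_ne_zero.mp h]
  | succ t ih =>
    obtain ⟨k, rfl⟩ : ∃ m, k = m + 1 := ⟨k - 1, by omega⟩
    rw [eSer_natCast_succ, coeff_succ_mul_one_add_C_mul_X, ih (by omega), ih (by omega),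
      mul_zero, add_zero]

theorem bext_one_sub (b : ℤ → R) (j : ℤ) : bext b (1 - j) = -bext b j := by
  unfold bext
  split_ifs <;> first | omega | simp

/-- `e_u^{[ℓ+1]} = e_u^{[ℓ]} (1 + b_{ℓ+1} u)` for every `ℓ ∈ ℤ`, thanks to the convention
`b_{-i} = -b_{i+1}` built into `bext`. -/
theorem eSer_add_one (ℓ : ℤ) (b : ℤ → R) :
    eSer (ℓ + 1) (fun i => b i) = eSer ℓ (fun i => b i) * (1 + C (bext b (ℓ + 1)) * X) := by
  rcases le_or_gt 0 ℓ with hℓ | hℓ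
  · lift ℓ to ℕ using hℓ
    rw [bext, if_pos (by omega), ← Nat.cast_succ, eSer_natCast_succ]
  · obtain ⟨t, rfl⟩ : ∃ t : ℕ, ℓ = -((t + 1 : ℕ) : ℤ) := ⟨(-ℓ - 1).toNat, by omega⟩
    have hb : bext b (-(t : ℤ)) = -b ((t + 1 : ℕ) : ℤ) := by
      rw [bext, if_neg (by omega)]
      push_cast
      ring_nf
    rw [show -((t + 1 : ℕ) : ℤ) + 1 = -(t : ℤ) by push_cast; ring, hb, eSer_neg_natCast,
      eSer_neg_natCast, prod_range_succ, map_neg, neg_mul, ← sub_eq_add_neg, mul_assoc,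
      geomSeries_mul_one_sub, mul_one]

theorem coeffZ_natCast (m : ℕ) (φ : PowerSeries R) : coeffZ (m : ℤ) φ = coeff m φ := by
  simp [coeffZ]

namespace MSTEntry

instance (a b : MSTEntry) : Decidable (a.le b) := by unfold le; infer_instance

theorem le_refl (a : MSTEntry) : a.le a := Or.inr ⟨rfl, Nat.le_refl _⟩

theorem le_trans {a b c : MSTEntry} (hab : a.le b) (hbc : b.le c) : a.le c := by
  unfold le at *; omega

/-- The largest entry that may stand strictly to the left of `e` in a row: primed and circled
letters may not repeat. -/
def pred : MSTEntry → MSTEntry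
  | prime k => unmarked (k - 1)
  | unmarked k => unmarked k
  | circ k => circ (k - 1)

theorem pred_le (e : MSTEntry) : e.pred.le e := by
  cases e <;> simp [le, pred, key, isCirc]
  omega

theorem le_pred_iff {a b : MSTEntry} (ha : 1 ≤ a.val) (hb : 1 ≤ b.val) :
    a.le b.pred ↔ a.le b ∧ (∀ k k', a = prime k → b = prime k' → k < k') ∧
      (∀ k k', a = circ k → b = circ k' → k < k') := by
  cases a <;> cases b <;> simp [le, pred, key, isCirc, val] at * <;> omega

def valid (n : ℕ) : MSTEntry → Prop
  | prime k => 1 ≤ k ∧ k ≤ n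
  | unmarked k => 1 ≤ k ∧ k ≤ n
  | circ k => 1 ≤ k

instance (n : ℕ) (e : MSTEntry) : Decidable (e.valid n) := by
  cases e <;> unfold valid <;> infer_instance

theorem valid_iff {n : ℕ} {e : MSTEntry} :
    e.valid n ↔ 1 ≤ e.val ∧ ∀ k, (e = unmarked k ∨ e = prime k) → k ≤ n := by
  cases e <;> simp [valid, val]

end MSTEntry

open MSTEntry

def allowedSet (n : ℕ) (ub : MSTEntry) : Finset MSTEntry :=
  ((range (n + ub.val + 1)).biUnion fun k => {prime k, unmarked k, circ k}).filter
    fun e => e.valid n ∧ e.le ub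

theorem mem_allowedSet {n : ℕ} {ub e : MSTEntry} :
    e ∈ allowedSet n ub ↔ e.valid n ∧ e.le ub := by
  simp only [allowedSet, mem_filter, mem_biUnion, mem_range, mem_insert, mem_singleton,
    and_iff_right_iff_imp]
  rintro ⟨hv, hle⟩
  cases e <;> cases ub <;> simp_all [valid, le, key, isCirc, MSTEntry.val] <;> omega

theorem allowedSet_circ_zero (n : ℕ) : allowedSet n (circ 0) = allowedSet n (unmarked n) := by
  ext e
  simp only [mem_allowedSet]
  cases e <;> simp [valid, le, key, isCirc] <;> omega

theorem allowedSet_unmarked_zero (n : ℕ) : allowedSet n (unmarked 0) = ∅ := by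
  ext e
  simp only [mem_allowedSet, notMem_empty, iff_false]
  cases e <;> simp [valid, le, key, isCirc] <;> omega

theorem allowedSet_circ_succ (n f : ℕ) :
    allowedSet n (circ (f + 1)) = insert (circ (f + 1)) (allowedSet n (circ f)) := by
  ext e
  simp only [mem_allowedSet, mem_insert]
  cases e <;> simp [valid, le, key, isCirc]
  omega

theorem allowedSet_unmarked_succ {n m : ℕ} (h : m + 1 ≤ n) :
    allowedSet n (unmarked (m + 1)) =
      insert (prime (m + 1)) (insert (unmarked (m + 1)) (allowedSet n (unmarked m))) := by
  ext e
  simp only [mem_allowedSet, mem_insert]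
  cases e <;> simp [valid, le, key, isCirc] <;> omega

theorem circ_succ_notMem_allowedSet (n f : ℕ) : circ (f + 1) ∉ allowedSet n (circ f) := by
  simp [mem_allowedSet, le, key, isCirc]

theorem unmarked_succ_notMem_allowedSet (n m : ℕ) :
    unmarked (m + 1) ∉ allowedSet n (unmarked m) := by
  simp [mem_allowedSet, le, key, isCirc]

theorem prime_succ_notMem_insert_allowedSet (n m : ℕ) :
    prime (m + 1) ∉ insert (unmarked (m + 1)) (allowedSet n (unmarked m)) := by
  simp [mem_allowedSet, le, key, isCirc]
  omega

theorem allowedSet_pred_subset {n : ℕ} {ub e : MSTEntry} (he : e ∈ allowedSet n ub) :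
    allowedSet n e.pred ⊆ allowedSet n ub := fun a ha => by
  rw [mem_allowedSet] at ha he ⊢
  exact ⟨ha.1, MSTEntry.le_trans ha.2 (MSTEntry.le_trans (pred_le e) he.2)⟩

/-- The rows of length `s` with entries bounded by `ub`, built from the right: `e.pred` bounds
everything left of the last entry `e`. -/
def words (n : ℕ) : (s : ℕ) → MSTEntry → Finset (Fin s → MSTEntry)
  | 0, _ => {Fin.elim0}
  | s + 1, ub => (allowedSet n ub).biUnion fun e => (words n s e.pred).image (Fin.snoc · e)

theorem mem_words {n s : ℕ} {ub : MSTEntry} {w : Fin s → MSTEntry} :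
    w ∈ words n s ub ↔ (∀ j, w j ∈ allowedSet n ub) ∧ ∀ i j, i < j → (w i).le (w j).pred := by
  induction s generalizing ub with
  | zero => simp [words, Subsingleton.elim w Fin.elim0]
  | succ s ih =>
    simp only [words, mem_biUnion, mem_image]
    constructor
    · rintro ⟨e, he, w, hw, rfl⟩
      obtain ⟨hw_mem, hw_pair⟩ := ih.1 hw
      refine ⟨Fin.lastCases (by simpa) fun j => by simpa using allowedSet_pred_subset he (hw_mem j),
        fun i j hij => ?_⟩
      obtain ⟨i, rfl⟩ := Fin.exists_castSucc_eq.2 (Fin.ne_last_of_lt hij)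
      induction j using Fin.lastCases with
      | last => simpa using (mem_allowedSet.1 (hw_mem i)).2
      | cast j => simpa using hw_pair i j (Fin.castSucc_lt_castSucc_iff.1 hij)
    · rintro ⟨hw_mem, hw_pair⟩
      refine ⟨w (Fin.last s), hw_mem _, Fin.init w, ih.2 ⟨fun j => ?_, fun i j hij => ?_⟩,
        Fin.snoc_init_self w⟩
      · exact mem_allowedSet.2 ⟨(mem_allowedSet.1 (hw_mem _)).1,
          hw_pair _ _ (Fin.castSucc_lt_last j)⟩
      · exact hw_pair _ _ (Fin.castSucc_lt_castSucc_iff.2 hij)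

theorem sum_words_succ {M : Type*} [AddCommMonoid M] (n s : ℕ) (ub : MSTEntry)
    (F : (Fin (s + 1) → MSTEntry) → M) :
    ∑ w ∈ words n (s + 1) ub, F w =
      ∑ e ∈ allowedSet n ub, ∑ w ∈ words n s e.pred, F (Fin.snoc w e) := by
  rw [words, sum_biUnion]
  · exact sum_congr rfl fun e _ =>
      sum_image fun w _ w' _ h => (Fin.snoc_injective2 h).1
  · intro e _ e' _ hne
    refine disjoint_left.2 fun v hv hv' => ?_
    obtain ⟨w, -, rfl⟩ := mem_image.1 hv
    obtain ⟨w', -, h⟩ := mem_image.1 hv'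
    exact hne (Fin.snoc_injective2 h).2.symm

section RowSum

variable {n : ℕ} {x z : ℕ → R} {b : ℤ → R}

def wordWeight (x z : ℕ → R) (b : ℤ → R) {s : ℕ} (w : Fin s → MSTEntry) : R :=
  ∏ j : Fin s, mstFactor x z b (1, j + 1) (w j)

theorem wordWeight_snoc {s : ℕ} (w : Fin s → MSTEntry) (e : MSTEntry) :
    wordWeight x z b (Fin.snoc w e : Fin (s + 1) → MSTEntry) =
      wordWeight x z b w * mstFactor x z b (1, s + 1) e := by
  simp [wordWeight, Fin.prod_univ_castSucc]

def rowSum (n : ℕ) (x z : ℕ → R) (b : ℤ → R) (s : ℕ) (ub : MSTEntry) : R :=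
  ∑ w ∈ words n s ub, wordWeight x z b w

theorem rowSum_zero (ub : MSTEntry) : rowSum n x z b 0 ub = 1 := by
  simp [rowSum, words, wordWeight]

theorem rowSum_succ (s : ℕ) (ub : MSTEntry) :
    rowSum n x z b (s + 1) ub =
      ∑ e ∈ allowedSet n ub, mstFactor x z b (1, s + 1) e * rowSum n x z b s e.pred := by
  simp only [rowSum, sum_words_succ, wordWeight_snoc, mul_sum, mul_comm]

theorem mstFactor_one_succ_unmarked (s k : ℕ) :
    mstFactor x z b (1, s + 1) (unmarked k) = x k + bext b s := by
  simp [mstFactor]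

theorem mstFactor_one_succ_prime (s k : ℕ) :
    mstFactor x z b (1, s + 1) (prime k) = x k - bext b s := by
  simp [mstFactor]

theorem mstFactor_one_succ_circ (s k : ℕ) :
    mstFactor x z b (1, s + 1) (circ k) = z k + bext b ((k : ℤ) - s) := by
  simp only [mstFactor]
  push_cast
  ring_nf

theorem rowSum_circ_zero (s : ℕ) : rowSum n x z b s (circ 0) = rowSum n x z b s (unmarked n) := by
  cases s with
  | zero => rw [rowSum_zero, rowSum_zero]
  | succ s => rw [rowSum_succ, rowSum_succ, allowedSet_circ_zero]

theorem rowSum_succ_unmarked_zero (s : ℕ) : rowSum n x z b (s + 1) (unmarked 0) = 0 := by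
  rw [rowSum_succ, allowedSet_unmarked_zero, sum_empty]

theorem rowSum_succ_circ_succ (s f : ℕ) :
    rowSum n x z b (s + 1) (circ (f + 1)) =
      rowSum n x z b (s + 1) (circ f) +
        (z (f + 1) + bext b ((f : ℤ) + 1 - s)) * rowSum n x z b s (circ f) := by
  rw [rowSum_succ, rowSum_succ, allowedSet_circ_succ, sum_insert (circ_succ_notMem_allowedSet n f),
    mstFactor_one_succ_circ, pred, Nat.add_sub_cancel, add_comm]
  push_cast
  rfl

theorem rowSum_succ_unmarked_succ {m : ℕ} (h : m + 1 ≤ n) (s : ℕ) :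
    rowSum n x z b (s + 1) (unmarked (m + 1)) =
      rowSum n x z b (s + 1) (unmarked m) +
        (x (m + 1) + bext b s) * rowSum n x z b s (unmarked (m + 1)) +
        (x (m + 1) - bext b s) * rowSum n x z b s (unmarked m) := by
  rw [rowSum_succ, rowSum_succ, allowedSet_unmarked_succ h,
    sum_insert (prime_succ_notMem_insert_allowedSet n m),
    sum_insert (unmarked_succ_notMem_allowedSet n m), mstFactor_one_succ_prime,
    mstFactor_one_succ_unmarked, pred, pred, Nat.add_sub_cancel]
  ring

theorem rowSum_unmarked_eq_coeff {m : ℕ} (hm : m ≤ n) (s : ℕ) :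
    rowSum n x z b s (unmarked m) = coeff s (qSer m x * eSer ((s : ℤ) - 1) (fun i => b i)) := by
  induction m generalizing s with
  | zero =>
    cases s with
    | zero => simp [rowSum_zero, coeff_zero_eq_constantCoeff]
    | succ s =>
      rw [rowSum_succ_unmarked_zero, qSer, prod_range_zero, one_mul, Nat.cast_succ,
        add_sub_cancel_right, coeff_eSer_natCast_of_lt _ (Nat.lt_succ_self s)]
  | succ m ih =>
    induction s with
    | zero => simp [rowSum_zero, coeff_zero_eq_constantCoeff]
    | succ s ihs =>
      set ℓ : ℤ := (s : ℤ) - 1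
      set a := x (m + 1)
      set β := bext b s
      have hE : eSer ((s + 1 : ℕ) - 1 : ℤ) (fun i => b i) =
          eSer ℓ (fun i => b i) * (1 + C β * X) := by
        rw [show ((s + 1 : ℕ) - 1 : ℤ) = ℓ + 1 by push_cast; ring, eSer_add_one,
          show ℓ + 1 = s by ring]
      have hQm := coeff_succ_mul_one_add_C_mul_X (qSer m x * eSer ℓ fun i => b i) β s
      have hQm1 := coeff_succ_mul_one_add_C_mul_X (qSer (m + 1) x * eSer ℓ fun i => b i) β s
      have hq := coeff_succ_mul_qFactor (qSer m x * eSer ℓ fun i => b i) a s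
      rw [show qSer m x * eSer ℓ (fun i => b i) * ((1 + C a * X) * geomSeries a) =
        qSer (m + 1) x * eSer ℓ (fun i => b i) by rw [qSer_succ]; ring] at hq
      rw [rowSum_succ_unmarked_succ hm, ih (by omega), ih (by omega), ihs, hE, ← mul_assoc,
        ← mul_assoc, hQm, hQm1]
      linear_combination -hq

theorem rowSum_circ_eq_coeff (f s : ℕ) :
    rowSum n x z b s (circ f) =
      coeff s (qSer n x * eSer f z * eSer ((s : ℤ) - f - 1) (fun i => b i)) := by
  induction f generalizing s with
  | zero =>
    rw [rowSum_circ_zero, rowSum_unmarked_eq_coeff le_rfl, Nat.cast_zero, sub_zero, eSer_zero,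
      mul_one]
  | succ f ih =>
    cases s with
    | zero => simp [rowSum_zero, coeff_zero_eq_constantCoeff]
    | succ s =>
      obtain ⟨ℓ, hℓ⟩ : ∃ ℓ : ℤ, ℓ = s - f - 1 := ⟨_, rfl⟩
      rw [rowSum_succ_circ_succ, ih, ih, eSer_natCast_succ,
        show ((s + 1 : ℕ) - f - 1 : ℤ) = ℓ + 1 by push_cast; omega,
        show ((s + 1 : ℕ) - (f + 1 : ℕ) - 1 : ℤ) = ℓ by push_cast; omega,
        show (f : ℤ) + 1 - s = 1 - (ℓ + 1) by omega, ← hℓ, bext_one_sub, eSer_add_one,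
        show qSer n x * (eSer f z * (1 + C (z (f + 1)) * X)) * eSer ℓ (fun i => b i) =
          qSer n x * eSer f z * eSer ℓ (fun i => b i) * (1 + C (z (f + 1)) * X) by ring,
        ← mul_assoc, coeff_succ_mul_one_add_C_mul_X, coeff_succ_mul_one_add_C_mul_X]
      ring

end RowSum

theorem mem_shiftedDiag_one {r i j : ℕ} :
    (i, j) ∈ shiftedDiag 1 (fun _ => r) ↔ i = 1 ∧ ∃ a : Fin r, j = a + 1 := by
  simp only [shiftedDiag, Set.mem_ofPred_eq]
  exact ⟨fun h => ⟨by omega, ⟨j - 1, by omega⟩, by simp; omega⟩,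
    fun ⟨hi, a, hj⟩ => by have := a.2; omega⟩

def rowTableau (r : ℕ) (w : Fin r → MSTEntry) : ℕ × ℕ → MSTEntry := fun p =>
  if h : p.1 = 1 ∧ 1 ≤ p.2 ∧ p.2 ≤ r then w ⟨p.2 - 1, by omega⟩ else unmarked 0

theorem rowTableau_apply {r : ℕ} (w : Fin r → MSTEntry) (j : Fin r) :
    rowTableau r w (1, (j : ℕ) + 1) = w j := by
  rw [rowTableau, dif_pos ⟨rfl, by omega, j.2⟩]
  rfl

theorem rowTableau_of_notMem {r : ℕ} (w : Fin r → MSTEntry) {p : ℕ × ℕ}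
    (hp : p ∉ shiftedDiag 1 (fun _ => r)) : rowTableau r w p = unmarked 0 :=
  dif_neg fun h => hp (by simp only [shiftedDiag, Set.mem_ofPred_eq]; omega)

theorem rowTableau_injective (r : ℕ) : Function.Injective (rowTableau r) := fun w w' h =>
  funext fun j => by rw [← rowTableau_apply w j, ← rowTableau_apply w' j, h]

theorem exists_mem_words_of_isMST {n r f : ℕ} {T : ℕ × ℕ → MSTEntry}
    (hT : IsMST n 1 (fun _ => r) (fun _ => f) T) :
    ∃ w ∈ words n r (circ f), rowTableau r w = T := by
  obtain ⟨hoff, hval, hrow, -, -, hprime, hcirc, hflag, hn⟩ := hT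
  have hD (j : Fin r) : (1, (j : ℕ) + 1) ∈ shiftedDiag 1 (fun _ => r) :=
    mem_shiftedDiag_one.2 ⟨rfl, j, rfl⟩
  refine ⟨fun j => T (1, j + 1), mem_words.2 ⟨fun j => ?_, fun i j hij => ?_⟩, ?_⟩
  · exact mem_allowedSet.2 ⟨valid_iff.2 ⟨hval _ (hD j), hn _ (hD j)⟩, hflag _ (hD j)⟩
  · have hij' : (i : ℕ) + 1 < j + 1 := by simpa using hij
    exact (le_pred_iff (hval _ (hD i)) (hval _ (hD j))).2
      ⟨hrow _ _ _ (hD i) (hD j) hij'.le, fun k k' => hprime _ _ _ k k' (hD i) (hD j) hij',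
        fun k k' => hcirc _ _ _ k k' (hD i) (hD j) hij'⟩
  · funext ⟨i, j⟩
    by_cases hp : (i, j) ∈ shiftedDiag 1 (fun _ => r)
    · obtain ⟨rfl, a, rfl⟩ := mem_shiftedDiag_one.1 hp
      exact rowTableau_apply _ a
    · rw [rowTableau_of_notMem _ hp, hoff _ hp]

theorem rowTableau_le_pred {n r : ℕ} {ub : MSTEntry} {w : Fin r → MSTEntry}
    (hw : w ∈ words n r ub) {j j' : ℕ} (hj : (1, j) ∈ shiftedDiag 1 (fun _ => r))
    (hj' : (1, j') ∈ shiftedDiag 1 (fun _ => r)) (hjj' : j < j') :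
    (rowTableau r w (1, j)).le (rowTableau r w (1, j')).pred := by
  obtain ⟨-, a, rfl⟩ := mem_shiftedDiag_one.1 hj
  obtain ⟨-, a', rfl⟩ := mem_shiftedDiag_one.1 hj'
  rw [rowTableau_apply, rowTableau_apply]
  exact (mem_words.1 hw).2 a a' (Fin.lt_def.2 (by omega))

theorem isMST_rowTableau {n r f : ℕ} {w : Fin r → MSTEntry} (hw : w ∈ words n r (circ f)) :
    IsMST n 1 (fun _ => r) (fun _ => f) (rowTableau r w) := by
  have hmem (p : ℕ × ℕ) (hp : p ∈ shiftedDiag 1 (fun _ => r)) :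
      rowTableau r w p ∈ allowedSet n (circ f) := by
    obtain ⟨i, j⟩ := p
    obtain ⟨rfl, a, rfl⟩ := mem_shiftedDiag_one.1 hp
    rw [rowTableau_apply]
    exact (mem_words.1 hw).1 a
  have hvalid p hp := valid_iff.1 (mem_allowedSet.1 (hmem p hp)).1
  have hlt {j j' : ℕ} (hj : (1, j) ∈ shiftedDiag 1 (fun _ => r))
      (hj' : (1, j') ∈ shiftedDiag 1 (fun _ => r)) (hjj' : j < j') :=
    (le_pred_iff (hvalid _ hj).1 (hvalid _ hj').1).1 (rowTableau_le_pred hw hj hj' hjj')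
  refine ⟨fun p hp => rowTableau_of_notMem w hp, fun p hp => (hvalid p hp).1, ?_, ?_, ?_,
    ?_, ?_, fun p hp => (mem_allowedSet.1 (hmem p hp)).2, fun p hp => (hvalid p hp).2⟩
  · rintro i j j' hj hj' hjj'
    obtain ⟨rfl, -⟩ := mem_shiftedDiag_one.1 hj
    rcases hjj'.eq_or_lt with rfl | h
    · exact le_refl _
    · exact (hlt hj hj' h).1
  · rintro i i' j hj hj' -
    obtain ⟨rfl, -⟩ := mem_shiftedDiag_one.1 hj
    obtain ⟨rfl, -⟩ := mem_shiftedDiag_one.1 hj'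
    exact le_refl _
  · rintro i i' j k k' hj hj' hii'
    obtain ⟨rfl, -⟩ := mem_shiftedDiag_one.1 hj
    obtain ⟨rfl, -⟩ := mem_shiftedDiag_one.1 hj'
    exact absurd hii' (lt_irrefl 1)
  · rintro i j j' k k' hj hj' hjj'
    obtain ⟨rfl, -⟩ := mem_shiftedDiag_one.1 hj
    exact (hlt hj hj' hjj').2.1 k k'
  · rintro i j j' k k' hj hj' hjj'
    obtain ⟨rfl, -⟩ := mem_shiftedDiag_one.1 hj
    exact (hlt hj hj' hjj').2.2 k k'

theorem setOf_isMST_one_row (n r f : ℕ) :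
    {T | IsMST n 1 (fun _ => r) (fun _ => f) T} = rowTableau r '' words n r (circ f) := by
  ext T
  exact ⟨exists_mem_words_of_isMST, fun ⟨_, hw, hT⟩ => hT ▸ isMST_rowTableau hw⟩

theorem mstWeight_rowTableau {r : ℕ} (x z : ℕ → R) (b : ℤ → R) (w : Fin r → MSTEntry) :
    mstWeight 1 (fun _ => r) x z b (rowTableau r w) = wordWeight x z b w := by
  rw [mstWeight, prod_range_one, wordWeight, ← Fin.prod_univ_eq_prod_range]
  simp only [zero_add, add_comm 1, rowTableau_apply]

theorem Qflag_one_row_eq_rowSum (n r f : ℕ) (x z : ℕ → R) (b : ℤ → R) :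
    Qflag n 1 (fun _ => r) (fun _ => f) x z b = rowSum n x z b r (circ f) := by
  rw [Qflag, setOf_isMST_one_row, finsum_mem_image (rowTableau_injective r).injOn,
    finsum_mem_coe_finset]
  exact sum_congr rfl fun w _ => mstWeight_rowTableau x z b w

/-- One-row case: the flagged factorial Q-function `Q_{(r),(f)}(x;z|b)` equals the single
generating-function coefficient `q_r^{[f|r−f−1]}(x;z|b)`, for every number `n` of
x-variables. -/
theorem statement_15 (R : Type*) [CommRing R] (n r f : ℕ) (x z : ℕ → R) (b : ℤ → R) :
    Qflag n 1 (fun _ => r) (fun _ => f) x z b =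
      qC2 (r : ℤ) (f : ℤ) ((r : ℤ) - (f : ℤ) - 1) n x z (fun i => b (i : ℤ)) := by
  rw [Qflag_one_row_eq_rowSum, rowSum_circ_eq_coeff, qC2, coeffZ_natCast]
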